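/- arXiv:2002.06536 — 3 statements merged into one kernel-verified Lean document; each statement's English description precedes it below -/
import Mathlib

section
/- If f : ℝ → ℂ is infinitely differentiable with compact support and its Fourier transform 𝓕f (given by (𝓕f)(ξ) = ∫ f(x) e^{-2πi x ξ} dx) is also infinitely differentiable with compact support, then f = 0. -/
open Real MeasureTheory
open scoped FourierTransform

open Complex Metric Filter Topology in
/-- If `f : ℝ → ℂ` is infinitely differentiable with compact support and its Fourier
transform `𝓕 f` is also infinitely differentiable with compact support, then `f = 0`. -/
theorem fourier_compactly_supported_smooth_eq_zero (f : ℝ → ℂ)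
    (hf_smooth : ContDiff ℝ (⊤ : ℕ∞) f) (hf_supp : HasCompactSupport f)
    (hFf_smooth : ContDiff ℝ (⊤ : ℕ∞) (𝓕 f)) (hFf_supp : HasCompactSupport (𝓕 f)) :
    f = 0 := by
  have hfc : Continuous f := hf_smooth.continuous
  have hfi : Integrable f := hfc.integrable_of_hasCompactSupport hf_supp
  obtain ⟨R, hR0, hR⟩ : ∃ R : ℝ, 0 ≤ R ∧ tsupport f ⊆ Metric.closedBall (0:ℝ) R := by
    obtain ⟨R, hR⟩ := hf_supp.isBounded.subset_closedBall 0
    exact ⟨max R 0, le_max_right _ _,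
      hR.trans (Metric.closedBall_subset_closedBall (le_max_left _ _))⟩
  set F : ℂ → ℂ := fun z => ∫ x : ℝ, Complex.exp ((-(2 * π * x) : ℂ) * z * Complex.I) * f x
    with hF
  have hFeq : ∀ w : ℝ, F w = 𝓕 f w := by
    intro w
    rw [Real.fourier_eq']
    simp only [hF, smul_eq_mul, RCLike.inner_apply, conj_trivial]
    congr 1 with x
    congr 2
    push_cast
    ring
  have hdiff : Differentiable ℂ F := by
    intro z₀
    set C : ℝ := Real.exp (2 * π * R * (|z₀.im| + 1)) with hCdef
    have hexp_bound : ∀ z ∈ ball z₀ 1, ∀ x : ℝ, |x| ≤ R →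
        ‖Complex.exp ((-(2 * π * x) : ℂ) * z * Complex.I)‖ ≤ C := by
      intro z hz x hx
      rw [Complex.norm_exp]
      apply Real.exp_le_exp.2
      have hre : ((-(2 * π * x) : ℂ) * z * Complex.I).re = 2 * π * x * z.im := by
        simp [Complex.mul_re, Complex.mul_im]
      rw [hre]
      have him : |z.im| ≤ |z₀.im| + 1 := by
        have h1 : |z.im - z₀.im| ≤ ‖z - z₀‖ := by
          simpa using Complex.abs_im_le_norm (z - z₀)
        have hz' : ‖z - z₀‖ < 1 := by simpa [dist_eq_norm] using hz
        calc |z.im| = |z₀.im + (z.im - z₀.im)| := by ring_nf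
          _ ≤ |z₀.im| + |z.im - z₀.im| := abs_add_le _ _
          _ ≤ |z₀.im| + 1 := by linarith
      calc 2 * π * x * z.im ≤ |2 * π * x * z.im| := le_abs_self _
        _ = 2 * π * |x| * |z.im| := by
            rw [abs_mul, abs_mul, abs_mul]
            norm_num [_root_.abs_of_nonneg Real.pi_pos.le]
        _ ≤ 2 * π * R * (|z₀.im| + 1) := by
            apply mul_le_mul
            · exact mul_le_mul_of_nonneg_left hx (by positivity)
            · exact him
            · exact abs_nonneg _
            · positivity
    have main := hasDerivAt_integral_of_dominated_loc_of_deriv_le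
      (F := fun (z : ℂ) (x : ℝ) => Complex.exp ((-(2 * π * x) : ℂ) * z * Complex.I) * f x)
      (F' := fun (z : ℂ) (x : ℝ) =>
        (-(2 * π * x) : ℂ) * Complex.I * Complex.exp ((-(2 * π * x) : ℂ) * z * Complex.I) * f x)
      (x₀ := z₀) (bound := fun x => 2 * π * R * C * ‖f x‖) (μ := volume) (s := ball z₀ 1) (ball_mem_nhds z₀ one_pos)
      ?_ ?_ ?_ ?_ ?_ ?_
    · exact main.2.differentiableAt
    · filter_upwards with z
      exact (Continuous.aestronglyMeasurable (by fun_prop))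
    · apply Continuous.integrable_of_hasCompactSupport (by fun_prop)
      apply HasCompactSupport.intro hf_supp
      intro x hx
      simp [image_eq_zero_of_notMem_tsupport hx]
    · exact (Continuous.aestronglyMeasurable (by fun_prop))
    · filter_upwards with x z hz
      by_cases hx : x ∈ tsupport f
      · have hxR : |x| ≤ R := by simpa [Real.norm_eq_abs] using hR hx
        rw [norm_mul, norm_mul, norm_mul]
        have h1 : ‖(-(2 * π * x) : ℂ)‖ = 2 * π * |x| := by
          rw [show ((-(2 * π * x) : ℂ)) = ((-(2 * π * x) : ℝ) : ℂ) by push_cast; ring]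
          rw [Complex.norm_real, Real.norm_eq_abs, abs_neg, abs_mul, abs_mul]
          norm_num [_root_.abs_of_nonneg Real.pi_pos.le]
        rw [h1]
        have := hexp_bound z hz x hxR
        calc 2 * π * |x| * ‖Complex.I‖ * ‖Complex.exp ((-(2 * π * x) : ℂ) * z * Complex.I)‖
              * ‖f x‖
            ≤ (2 * π * R) * 1 * C * ‖f x‖ := by
              apply mul_le_mul_of_nonneg_right _ (norm_nonneg _)
              apply mul_le_mul _ this (norm_nonneg _) (by positivity)
              simp
              exact mul_le_mul_of_nonneg_left hxR (by positivity)
          _ = 2 * π * R * C * ‖f x‖ := by ring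
      · simp only [image_eq_zero_of_notMem_tsupport hx, mul_zero, norm_zero]
        positivity
    · exact (hfi.norm.const_mul _)
    · filter_upwards with x z _
      have h := ((((hasDerivAt_id z).const_mul ((-(2 * π * x) : ℂ))).mul_const
        Complex.I).cexp).mul_const (f x)
      simp only [id_eq] at h
      convert h using 1
      · rfl
      · ring
  have han : AnalyticOnNhd ℂ F Set.univ := analyticOnNhd_univ_iff_differentiable.2 hdiff
  obtain ⟨S, hS⟩ := hFf_supp.isBounded.subset_closedBall 0
  have hFzero : ∀ x : ℝ, S < x → F x = 0 := by
    intro x hx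
    rw [hFeq]
    apply image_eq_zero_of_notMem_tsupport
    intro h
    have := hS h
    simp only [Metric.mem_closedBall, dist_zero_right, Real.norm_eq_abs] at this
    exact absurd (lt_of_lt_of_le hx (le_abs_self x)) (not_lt.2 this)
  have hEq : Set.EqOn F 0 Set.univ := by
    apply han.eqOn_zero_of_preconnected_of_frequently_eq_zero isPreconnected_univ
      (Set.mem_univ ((S + 1 : ℝ) : ℂ))
    have htend : Tendsto (fun n : ℕ => ((S + 1 + 1 / (n + 1) : ℝ) : ℂ)) atTop
        (𝓝[≠] ((S + 1 : ℝ) : ℂ)) := by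
      rw [tendsto_nhdsWithin_iff]
      constructor
      · have : Tendsto (fun n : ℕ => (S + 1 + 1 / (n + 1) : ℝ)) atTop (𝓝 (S + 1)) := by
          simpa using (tendsto_const_nhds (x := S + 1)).add tendsto_one_div_add_atTop_nhds_zero_nat
        exact (Complex.continuous_ofReal.tendsto _).comp this
      · filter_upwards with n
        simp only [Set.mem_compl_iff, Set.mem_singleton_iff, Complex.ofReal_inj]
        intro h
        have hpos : (0:ℝ) < 1 / ((n:ℝ) + 1) := by positivity
        linarith
    apply htend.frequently
    apply Frequently.of_forall
    intro n
    apply hFzero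
    have : (0:ℝ) < 1 / (n + 1) := by positivity
    linarith
  have hFf0 : 𝓕 f = 0 := by
    funext w
    rw [← hFeq w]
    exact hEq (Set.mem_univ _)
  have hFfi : Integrable (𝓕 f) := hFf_smooth.continuous.integrable_of_hasCompactSupport hFf_supp
  have hinv := hfc.fourierInv_fourier_eq hfi hFfi
  rw [hFf0] at hinv
  rw [← hinv]
  funext v
  simp [Real.fourierInv_eq]
end

section
/- There exists a densely defined linear operator T in the Hilbert space L²(ℝ) such that T is paranormal (‖Tx‖² ≤ ‖T²x‖·‖x‖ for all x ∈ D(T²)) and T is not closable, i.e., T has no closed linear extension. -/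
/-!
Choose a linearly independent sequence `e n → 0` and, extending from its span, linear
functionals `ψ`, `φ` with `ψ (e n) = 1` and `φ (e n) = n`. Let `T x = φ x • e 0` on
`D(T) = ker ψ`. Since `ψ` is unbounded its kernel is dense. Since `ψ (e 0) ≠ 0`, `T x ∈ D(T)`
forces `T x = 0`, so the paranormality inequality holds trivially. Finally
`e (n + 1) - e n ∈ ker ψ` tends to `0` while `T` sends it to `e 0 ≠ 0`, so `(0, e 0)` lies in
the closure of the graph of `T`.
-/

open MeasureTheory Filter Topology
open scoped Function

theorem LinearIndependent.exists_linearMap_apply_eq {K V V' ι : Type*} [Field K]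
    [AddCommGroup V] [Module K V] [AddCommGroup V'] [Module K V'] {e : ι → V}
    (he : LinearIndependent K e) (g : ι → V') : ∃ f : V →ₗ[K] V', ∀ i, f (e i) = g i := by
  obtain ⟨f, hf⟩ := LinearMap.exists_extend ((Finsupp.linearCombination K g).comp he.repr)
  refine ⟨f, fun i => ?_⟩
  have := LinearMap.congr_fun hf ⟨e i, Submodule.subset_span ⟨i, rfl⟩⟩
  simpa [he.repr_eq_single i ⟨e i, _⟩ rfl] using this

theorem LinearMap.dense_ker_of_tendsto_zero {𝕜 E ι : Type*} [NontriviallyNormedField 𝕜]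
    [AddCommGroup E] [Module 𝕜 E] [TopologicalSpace E] [IsTopologicalAddGroup E]
    [ContinuousSMul 𝕜 E] {f : E →ₗ[𝕜] 𝕜} {l : Filter ι} [l.NeBot] {x : ι → E}
    (hx : Tendsto x l (𝓝 0)) (hfx : ∀ i, f (x i) = 1) : Dense (LinearMap.ker f : Set E) := by
  refine f.isClosed_or_dense_ker.resolve_left fun hker => ?_
  have hlim : Tendsto (fun i => f (x i)) l (𝓝 0) := by
    simpa only [map_zero, Function.comp_def] using
      ((f.continuous_of_isClosed_ker hker).tendsto 0).comp hx
  simp only [hfx] at hlim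
  exact one_ne_zero (tendsto_nhds_unique tendsto_const_nhds hlim)

theorem LinearPMap.not_exists_isClosed_le_of_tendsto {R E F ι : Type*} [CommRing R]
    [AddCommGroup E] [Module R E] [TopologicalSpace E] [AddCommGroup F] [Module R F]
    [TopologicalSpace F] {T : E →ₗ.[R] F} {l : Filter ι} [l.NeBot] {x : ι → T.domain} {v : F}
    (hv : v ≠ 0) (hx : Tendsto (fun i => (x i : E)) l (𝓝 0))
    (hTx : Tendsto (fun i => T (x i)) l (𝓝 v)) :
    ¬ ∃ S : E →ₗ.[R] F, S.IsClosed ∧ T ≤ S := by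
  rintro ⟨S, hS, hTS⟩
  have hgraph : ∀ i, ((x i : E), T (x i)) ∈ S.graph := fun i =>
    LinearPMap.le_graph_of_le hTS (T.mem_graph (x i))
  exact hv (S.graph_fst_eq_zero_snd
    (hS.mem_of_tendsto (hx.prodMk_nhds hTx) (Eventually.of_forall hgraph)) rfl)

theorem exists_dense_not_closable_of_linearIndependent {𝕜 E : Type*}
    [NontriviallyNormedField 𝕜] [AddCommGroup E] [Module 𝕜 E] [TopologicalSpace E]
    [IsTopologicalAddGroup E] [ContinuousSMul 𝕜 E] {e : ℕ → E} (he : LinearIndependent 𝕜 e)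
    (he0 : Tendsto e atTop (𝓝 0)) :
    ∃ T : E →ₗ.[𝕜] E, Dense (T.domain : Set E) ∧
      (∀ x : T.domain, (T x : E) ∈ T.domain → T x = 0) ∧
      ¬ ∃ S : E →ₗ.[𝕜] E, S.IsClosed ∧ T ≤ S := by
  obtain ⟨ψ, hψ⟩ := he.exists_linearMap_apply_eq (fun _ => (1 : 𝕜))
  obtain ⟨φ, hφ⟩ := he.exists_linearMap_apply_eq (fun n => (n : 𝕜))
  let T := (φ.smulRight (e 0)).toPMap (LinearMap.ker ψ)
  have hT : ∀ x : T.domain, T x = φ x • e 0 := fun _ => rfl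
  let y : ℕ → T.domain := fun n => ⟨e (n + 1) - e n, LinearMap.mem_ker.mpr (by simp [hψ])⟩
  have hy : ∀ n, T (y n) = e 0 := fun n => by simp [hT, y, hφ]
  refine ⟨T, LinearMap.dense_ker_of_tendsto_zero he0 hψ, fun x hx => ?_,
    LinearPMap.not_exists_isClosed_le_of_tendsto (l := atTop) (x := y) (he.ne_zero 0) ?_ ?_⟩
  · have hψx : ψ (T x) = 0 := hx
    have hφx : φ x = 0 := by simpa [hT, hψ] using hψx
    rw [hT, hφx, zero_smul]
  · simpa using ((he0.comp (tendsto_add_atTop_nat 1)).sub he0)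
  · simp only [hy, tendsto_const_nhds]

theorem linearIndependent_indicatorConstLp {α 𝕜 E ι : Type*} [MeasurableSpace α]
    {μ : Measure α} [RCLike 𝕜] [NormedAddCommGroup E] [InnerProductSpace 𝕜 E] [CompleteSpace E]
    {s : ι → Set α} (hs : ∀ i, MeasurableSet (s i)) (hμs : ∀ i, μ (s i) ≠ ⊤)
    (hμs₀ : ∀ i, μ (s i) ≠ 0) (hd : Pairwise (Disjoint on s)) {c : ι → E} (hc : ∀ i, c i ≠ 0) :
    LinearIndependent 𝕜 fun i => indicatorConstLp 2 (hs i) (hμs i) (c i) := by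
  refine linearIndependent_of_ne_zero_of_inner_eq_zero (fun i => ?_) fun i j hij => ?_
  · rw [← norm_ne_zero_iff, norm_indicatorConstLp two_ne_zero ENNReal.ofNat_ne_top]
    have : 0 < ‖c i‖ := norm_pos_iff.mpr (hc i)
    have : 0 < μ.real (s i) := ENNReal.toReal_pos (hμs₀ i) (hμs i)
    positivity
  · simp only [L2.inner_indicatorConstLp_indicatorConstLp (hs i) (hs j) (hμs i) (hμs j),
      (hd hij).inter_eq, measureReal_empty, zero_smul]

theorem exists_linearIndependent_tendsto_zero_L2_real (𝕜 : Type*) [RCLike 𝕜] :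
    ∃ e : ℕ → Lp 𝕜 2 (volume : Measure ℝ), LinearIndependent 𝕜 e ∧ Tendsto e atTop (𝓝 0) := by
  have hd : Pairwise (Disjoint on fun n : ℕ => Set.Ico (n : ℝ) (n + 1)) := by
    intro m n hmn
    simpa [Function.onFun] using
      Set.pairwise_disjoint_Ico_intCast ℝ (Nat.cast_injective.ne hmn : (m : ℤ) ≠ n)
  refine ⟨_, linearIndependent_indicatorConstLp (fun _ => measurableSet_Ico) (fun _ => by simp)
    (fun _ => by simp) hd (c := fun n : ℕ => ((n + 1 : ℕ) : 𝕜)⁻¹)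
    (fun n => by simp [Nat.cast_add_one_ne_zero]), ?_⟩
  rw [tendsto_zero_iff_norm_tendsto_zero]
  simp_rw [norm_indicatorConstLp two_ne_zero ENNReal.ofNat_ne_top]
  refine tendsto_one_div_add_atTop_nhds_zero_nat.congr fun n => ?_
  rw [norm_inv, RCLike.norm_natCast]
  simp

/-- There exists a densely defined linear operator `T` in `L²(ℝ)` which is paranormal
(`‖Tx‖² ≤ ‖T²x‖ ⬝ ‖x‖` for every `x ∈ D(T²) = {x ∈ D(T) : Tx ∈ D(T)}`) but not
closable, i.e. `T` has no closed linear extension. -/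
theorem exists_paranormal_not_closable :
    ∃ T : Lp ℂ 2 (volume : Measure ℝ) →ₗ.[ℂ] Lp ℂ 2 (volume : Measure ℝ),
      Dense (T.domain : Set (Lp ℂ 2 (volume : Measure ℝ))) ∧
      (∀ (x : T.domain) (hx : (T x : Lp ℂ 2 (volume : Measure ℝ)) ∈ T.domain),
        ‖(T x : Lp ℂ 2 (volume : Measure ℝ))‖ ^ 2 ≤
          ‖(T ⟨T x, hx⟩ : Lp ℂ 2 (volume : Measure ℝ))‖ * ‖(x : Lp ℂ 2 (volume : Measure ℝ))‖) ∧
      ¬ ∃ S : Lp ℂ 2 (volume : Measure ℝ) →ₗ.[ℂ] Lp ℂ 2 (volume : Measure ℝ),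
          S.IsClosed ∧ T ≤ S := by
  obtain ⟨e, he, he0⟩ := exists_linearIndependent_tendsto_zero_L2_real ℂ
  obtain ⟨T, hdense, hT, hnot⟩ := exists_dense_not_closable_of_linearIndependent he he0
  refine ⟨T, hdense, fun x hx => ?_, hnot⟩
  simp only [hT x hx, norm_zero, sq, zero_mul]
  positivity
end

section
/- Let S be the bounded linear operator on L²(ℝ) ⊕ L²(ℝ) defined by S(f, g) = (𝓕g, (1/2)𝓕f), where 𝓕 is the Fourier–Plancherel transform on L²(ℝ). Then S is not paranormal: for every g ∈ L²(ℝ) with g ≠ 0, the vector x = (0, g) satisfies ‖Sx‖² > ‖S²x‖·‖x‖; more precisely, ‖S(0,g)‖² = ‖g‖² while ‖S²(0,g)‖·‖(0,g)‖ = (1/2)‖g‖². -/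
open MeasureTheory
open scoped FourierTransform

/-- `U` is the Fourier–Plancherel transform on `L²(ℝ)`: a unitary (isometric surjective
linear) operator extending the Fourier integral transform on integrable functions. -/
def IsFourierPlancherel
    (U : Lp ℂ 2 (volume : Measure ℝ) →L[ℂ] Lp ℂ 2 (volume : Measure ℝ)) : Prop :=
  (∀ f, ‖U f‖ = ‖f‖) ∧ Function.Surjective U ∧
    ∀ f : Lp ℂ 2 (volume : Measure ℝ), Integrable (f : ℝ → ℂ) volume →
      (U f : ℝ → ℂ) =ᵐ[volume] 𝓕 (f : ℝ → ℂ)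

local notation "e" => WithLp.equiv 2 (Lp ℂ 2 (volume : Measure ℝ) × Lp ℂ 2 (volume : Measure ℝ))

private lemma sq_eq_aux {a b : ℝ} (ha : 0 ≤ a) (hb : 0 ≤ b) (h : a ^ 2 = b ^ 2) :
    a = b := by nlinarith

set_option maxHeartbeats 1000000 in
/-- The bounded operator `S(f, g) = (𝓕g, ½𝓕f)` on `L²(ℝ) ⊕ L²(ℝ)`, with `𝓕` the
Fourier–Plancherel transform, is not paranormal: for every `g ≠ 0`, the vector
`x = (0, g)` satisfies `‖Sx‖² > ‖S²x‖ ⬝ ‖x‖`; precisely, `‖S(0,g)‖² = ‖g‖²` while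
`‖S²(0,g)‖ ⬝ ‖(0,g)‖ = ½‖g‖²`. -/
theorem fourier_offdiag_bounded_not_paranormal
    (U : Lp ℂ 2 (volume : Measure ℝ) →L[ℂ] Lp ℂ 2 (volume : Measure ℝ))
    (hU : IsFourierPlancherel U)
    (S : WithLp 2 (Lp ℂ 2 (volume : Measure ℝ) × Lp ℂ 2 (volume : Measure ℝ)) →L[ℂ]
         WithLp 2 (Lp ℂ 2 (volume : Measure ℝ) × Lp ℂ 2 (volume : Measure ℝ)))
    (hS : ∀ y, e (S y) = (U (e y).2, (2 : ℂ)⁻¹ • U (e y).1))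
    (g : Lp ℂ 2 (volume : Measure ℝ)) (hg : g ≠ 0) :
    ‖S ((e).symm (0, g))‖ ^ 2 > ‖S (S ((e).symm (0, g)))‖ * ‖(e).symm (0, g)‖ ∧
    ‖S ((e).symm (0, g))‖ ^ 2 = ‖g‖ ^ 2 ∧
    ‖S (S ((e).symm (0, g)))‖ * ‖(e).symm (0, g)‖ = 1 / 2 * ‖g‖ ^ 2 := by
  obtain ⟨hiso, -, -⟩ := hU
  set x := (e).symm (0, g) with hx
  have hex : e x = (0, g) := by simp [hx]
  have h1 : S x = (e).symm (U g, 0) := by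
    apply (WithLp.equiv 2 _).injective
    simp [hS x, hex]
  have h2 : S (S x) = (e).symm (0, (2 : ℂ)⁻¹ • U (U g)) := by
    apply (WithLp.equiv 2 _).injective
    simp [hS, h1]
  have hnx : ‖x‖ = ‖g‖ := by
    have := WithLp.prod_norm_sq_eq_of_L2 x
    have hfst : x.fst = 0 := congrArg Prod.fst hex
    have hsnd : x.snd = g := congrArg Prod.snd hex
    rw [hfst, hsnd] at this
    have h2 : ‖x‖ ^ 2 = ‖g‖ ^ 2 := by simpa using this
    exact sq_eq_aux (norm_nonneg _) (norm_nonneg _) h2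
  have hn1 : ‖S x‖ = ‖g‖ := by
    have := WithLp.prod_norm_sq_eq_of_L2 (S x)
    have hfst : (S x).fst = U g := by rw [h1]; rfl
    have hsnd : (S x).snd = 0 := by rw [h1]; rfl
    rw [hfst, hsnd, hiso] at this
    have h2 : ‖S x‖ ^ 2 = ‖g‖ ^ 2 := by simpa using this
    exact sq_eq_aux (norm_nonneg _) (norm_nonneg _) h2
  have hn2 : ‖S (S x)‖ = 2⁻¹ * ‖g‖ := by
    have := WithLp.prod_norm_sq_eq_of_L2 (S (S x))
    have hfst : (S (S x)).fst = 0 := by rw [h2]; rfl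
    have hsnd : (S (S x)).snd = (2 : ℂ)⁻¹ • U (U g) := by rw [h2]; rfl
    rw [hfst, hsnd] at this
    have h2 : ‖S (S x)‖ ^ 2 = (2⁻¹ * ‖g‖) ^ 2 := by
      rw [this, norm_smul, hiso, hiso]
      norm_num
    exact sq_eq_aux (norm_nonneg _) (by positivity) h2
  have hgpos : 0 < ‖g‖ := norm_pos_iff.mpr hg
  refine ⟨?_, by rw [hn1], by rw [hn2, hnx]; ring⟩
  rw [hn1, hn2, hnx]
  have : (2:ℝ)⁻¹ * ‖g‖ * ‖g‖ < ‖g‖ ^ 2 := by nlinarith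
  exact this
end
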